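/- Let p : ℝ → ℝ be a polynomial function of degree at most 3. Then for every x ∈ ℝ and every h > 0, the average of the left and right QUICK interpolated values (κ = 1/2) at the right face is exact: (uL(p,h) + uR(p,h))/2 = p(x + h/2). -/

import Mathlib

/-!
At `κ = 1/2` the average of the two face values is the four-point stencil
`(9 (v x + v (x + h)) - (v (x - h) + v (x + 2h))) / 16`, centred at the face `x + h/2`
with nodes at distances `h/2` and `3h/2`. Expanding a cubic in powers of the distance to the
face, the odd terms cancel by symmetry, the weights sum to `1`, and the second moment
`9 (h/2)² - (3h/2)²` vanishes, so only the value at the face survives.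
-/

open Asymptotics Filter Set MeasureTheory

noncomputable def uL (κ x : ℝ) (v : ℝ → ℝ) (h : ℝ) : ℝ :=
  (v x + v (x + h)) / 2 - ((1 - κ) / 4) * (v (x + h) - 2 * v x + v (x - h))

noncomputable def uR (κ x : ℝ) (v : ℝ → ℝ) (h : ℝ) : ℝ :=
  (v (x + h) + v x) / 2 - ((1 - κ) / 4) * (v (x + 2 * h) - 2 * v (x + h) + v x)

/-- Left-face interpolated value from the left: same formula with `x` replaced by `x - h`. -/
noncomputable def uLm (κ x : ℝ) (v : ℝ → ℝ) (h : ℝ) : ℝ := uL κ (x - h) v h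

/-- Left-face interpolated value from the right: same formula with `x` replaced by `x - h`. -/
noncomputable def uRm (κ x : ℝ) (v : ℝ → ℝ) (h : ℝ) : ℝ := uR κ (x - h) v h

lemma uL_add_uR_half_div_two (x : ℝ) (v : ℝ → ℝ) (h : ℝ) :
    (uL (1 / 2) x v h + uR (1 / 2) x v h) / 2
      = (9 * (v x + v (x + h)) - (v (x - h) + v (x + 2 * h))) / 16 := by
  unfold uL uR
  ring

lemma Polynomial.eval_symmetric_four_point_stencil {p : Polynomial ℝ} (hp : p.natDegree ≤ 3)
    (m s : ℝ) :
    (9 * (p.eval (m - s) + p.eval (m + s)) - (p.eval (m - 3 * s) + p.eval (m + 3 * s))) / 16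
      = p.eval m := by
  set q := p.taylor m
  have hq : q.natDegree ≤ 3 := by rwa [Polynomial.natDegree_taylor]
  have shift (t : ℝ) : p.eval (m + t) = ∑ i ∈ Finset.range 4, q.coeff i * t ^ i := by
    rw [← q.eval_eq_sum_range' (by omega), Polynomial.taylor_eval, add_comm]
  have hm : p.eval m = q.coeff 0 := (Polynomial.taylor_coeff_zero ..).symm
  rw [sub_eq_add_neg m, sub_eq_add_neg m, ← neg_mul, shift, shift, shift, shift, hm]
  simp only [Finset.sum_range_succ, Finset.sum_range_zero]
  ring

theorem quick_average_cubic_exactness_general (p : Polynomial ℝ) (hp : p.natDegree ≤ 3)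
    (x : ℝ) (h : ℝ) :
    (uL (1 / 2) x (fun ξ => p.eval ξ) h + uR (1 / 2) x (fun ξ => p.eval ξ) h) / 2
      = p.eval (x + h / 2) := by
  rw [uL_add_uR_half_div_two, ← p.eval_symmetric_four_point_stencil hp (x + h / 2) (h / 2)]
  ring_nf

theorem quick_average_cubic_exactness (p : Polynomial ℝ) (hp : p.natDegree ≤ 3)
    (x : ℝ) (h : ℝ) (hh : 0 < h) :
    (uL (1 / 2) x (fun ξ => p.eval ξ) h + uR (1 / 2) x (fun ξ => p.eval ξ) h) / 2
      = p.eval (x + h / 2) :=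
  quick_average_cubic_exactness_general p hp x h
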